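/- Let f : ℝ → ℝ be twice continuously differentiable with f > 0, and define k(y) := (σ̂²/2)·f''(y)/f(y) - (β + δ) + (c - βy)·f'(y)/f(y). If y∞ ∈ ℝ satisfies f'(y∞)/f(y∞) = Φ''(y∞)/Φ'(y∞), then k(y∞) = (σ̂²/2)·[ (f'/f)'(y∞) - (Φ''/Φ')'(y∞) ]. In particular, if additionally (f'/f)'(y∞) < (Φ''/Φ')'(y∞), then k(y∞) < 0. -/

import Mathlib

/-!
Differentiating under the integral sign gives `F_b' = -2 F_{b+1}`, and integrating
`d/dt (exp(-t² - 2zt) t^{b+1})` over `(0, ∞)` gives `2 F_{b+2}(z) + 2z F_{b+1}(z) = (b+1) F_b(z)`.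
Hence `Φ' = p · F_{a+1} ∘ u` with `p = 2β/(√β σ̂)` solves the differentiated eigenvalue equation
`(σ̂²/2) g'' + (c - βy) g' = (β + δ) g`. For `r = f'/f` and `q = g'/g` one has `r' = f''/f - r²`
and `q' = g''/g - q²`; at `y∞`, where `r = q`, the squares cancel and the equation for `g`
turns `(σ̂²/2)(r' - q')` into `k(y∞)`.
-/

open MeasureTheory Real Filter
open scoped Topology

/-- `Fa a x = ∫₀^∞ exp(-t² - 2xt) · t^a dt`, a Hermite-type function of negative degree. -/
noncomputable def Fa (a x : ℝ) : ℝ :=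
  ∫ t in Set.Ioi (0 : ℝ), Real.exp (-(t ^ 2) - 2 * x * t) * t ^ a

/-- `Phi β σh δ c x = F_a(u(x))` with `a = δ/β - 1` and `u(x) = (c - βx)/(√β·σ̂)`. -/
noncomputable def Phi (β σh δ c : ℝ) (x : ℝ) : ℝ :=
  Fa (δ / β - 1) ((c - β * x) / (Real.sqrt β * σh))

/-- `M₁ = (f·Φ' - f'·Φ)/D` with `D = (Φ')² - Φ·Φ''`. -/
noncomputable def M1 (β σh δ c : ℝ) (f : ℝ → ℝ) (y : ℝ) : ℝ :=
  (f y * deriv (Phi β σh δ c) y - deriv f y * Phi β σh δ c y) /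
    ((deriv (Phi β σh δ c) y) ^ 2 - Phi β σh δ c y * deriv (deriv (Phi β σh δ c)) y)

/-- `M₂ = (f'·Φ' - f·Φ'')/D` with `D = (Φ')² - Φ·Φ''`. -/
noncomputable def M2 (β σh δ c : ℝ) (f : ℝ → ℝ) (y : ℝ) : ℝ :=
  (deriv f y * deriv (Phi β σh δ c) y - f y * deriv (deriv (Phi β σh δ c)) y) /
    ((deriv (Phi β σh δ c) y) ^ 2 - Phi β σh δ c y * deriv (deriv (Phi β σh δ c)) y)

noncomputable def faIntegrand (a x t : ℝ) : ℝ :=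
  exp (-(t ^ 2) - 2 * x * t) * t ^ a

section faIntegrand

variable {a x t : ℝ}

lemma faIntegrand_pos (ht : 0 < t) : 0 < faIntegrand a x t := by
  unfold faIntegrand; positivity

lemma continuousOn_faIntegrand : ContinuousOn (faIntegrand a x) (Set.Ioi 0) :=
  ((continuous_exp.comp (by fun_prop)).continuousOn).mul
    (continuousOn_id.rpow_const fun _ ht => Or.inl (ne_of_gt ht))

lemma faIntegrand_antitone_param {y : ℝ} (hxy : x ≤ y) (ht : 0 ≤ t) :
    faIntegrand a y t ≤ faIntegrand a x t := by
  unfold faIntegrand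
  gcongr

/-- Completing the square: `-t² - 2xt ≤ 2x² - t²/2 ≤ 2x² + 1/2 - t`. -/
lemma faIntegrand_le_exp_mul (ht : 0 ≤ t) :
    faIntegrand a x t ≤ exp (2 * x ^ 2 + 1 / 2) * (t ^ a * exp (-1 * t)) := by
  have hexp : -(t ^ 2) - 2 * x * t ≤ 2 * x ^ 2 + 1 / 2 + -1 * t := by
    nlinarith [sq_nonneg (2 * x + t), sq_nonneg (t - 1)]
  calc faIntegrand a x t ≤ exp (2 * x ^ 2 + 1 / 2 + -1 * t) * t ^ a := by
        unfold faIntegrand; gcongr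
    _ = _ := by rw [exp_add]; ring

lemma integrableOn_faIntegrand (ha : -1 < a) (x : ℝ) :
    IntegrableOn (faIntegrand a x) (Set.Ioi 0) := by
  have hGamma : IntegrableOn (fun t => t ^ a * exp (-1 * t)) (Set.Ioi 0) := by
    simpa [mul_comm] using GammaIntegral_convergent (s := a + 1) (by linarith)
  refine (hGamma.const_mul (exp (2 * x ^ 2 + 1 / 2))).mono'
    (continuousOn_faIntegrand.aestronglyMeasurable measurableSet_Ioi) ?_
  filter_upwards [ae_restrict_mem measurableSet_Ioi] with t (ht : 0 < t)
  rw [norm_of_nonneg (faIntegrand_pos ht).le]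
  exact faIntegrand_le_exp_mul ht.le

lemma tendsto_faIntegrand_atTop : Tendsto (faIntegrand a x) atTop (𝓝 0) := by
  have hlim := (tendsto_rpow_mul_exp_neg_mul_atTop_nhds_zero a 1 one_pos).const_mul
    (exp (2 * x ^ 2 + 1 / 2))
  rw [mul_zero] at hlim
  refine squeeze_zero' ?_ ?_ hlim
  · filter_upwards [eventually_gt_atTop 0] with t ht using (faIntegrand_pos ht).le
  · filter_upwards [eventually_ge_atTop 0] with t ht using faIntegrand_le_exp_mul ht

lemma hasDerivAt_faIntegrand_param (ht : 0 < t) :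
    HasDerivAt (faIntegrand a · t) (-2 * faIntegrand (a + 1) x t) x := by
  have hexp : HasDerivAt (fun x => -(t ^ 2) - 2 * x * t) (-(2 * 1 * t)) x :=
    (((hasDerivAt_id' x).const_mul 2).mul_const t).const_sub _
  refine (hexp.exp.mul_const (t ^ a)).congr_deriv ?_
  unfold faIntegrand
  rw [rpow_add_one ht.ne']
  ring

lemma hasDerivAt_faIntegrand (ht : 0 < t) :
    HasDerivAt (faIntegrand (a + 1) x)
      ((a + 1) * faIntegrand a x t - 2 * faIntegrand (a + 2) x t - 2 * x * faIntegrand (a + 1) x t)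
      t := by
  have hexp : HasDerivAt (fun t => -(t ^ 2) - 2 * x * t) (-(↑2 * t ^ (2 - 1)) - 2 * x * 1) t :=
    (hasDerivAt_pow 2 t).neg.sub ((hasDerivAt_id' t).const_mul (2 * x))
  refine (hexp.exp.mul (hasDerivAt_rpow_const (p := a + 1) (Or.inl ht.ne'))).congr_deriv ?_
  unfold faIntegrand
  rw [add_sub_cancel_right]
  simp only [rpow_add ht, rpow_one, rpow_two]
  ring

end faIntegrand

section Fa

variable {a : ℝ}

lemma Fa_pos (ha : -1 < a) (x : ℝ) : 0 < Fa a x := by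
  change 0 < ∫ t in Set.Ioi 0, faIntegrand a x t
  have hnonneg : 0 ≤ᵐ[volume.restrict (Set.Ioi 0)] faIntegrand a x := by
    filter_upwards [ae_restrict_mem measurableSet_Ioi] with t (ht : 0 < t)
    exact (faIntegrand_pos ht).le
  have hsupp : Set.Ioi 0 ⊆ Function.support (faIntegrand a x) :=
    fun t (ht : 0 < t) => (faIntegrand_pos ht).ne'
  rw [setIntegral_pos_iff_support_of_nonneg_ae hnonneg (integrableOn_faIntegrand ha x),
    Set.inter_eq_right.mpr hsupp]
  simp

/-- Differentiation under the integral sign, dominated near `x₀` by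
`2 · faIntegrand (a + 1) (x₀ - 1)`. -/
lemma hasDerivAt_Fa (ha : -1 < a) (x₀ : ℝ) : HasDerivAt (Fa a) (-2 * Fa (a + 1) x₀) x₀ := by
  have hmeas : ∀ b x, AEStronglyMeasurable (faIntegrand b x) (volume.restrict (Set.Ioi 0)) :=
    fun _ _ => continuousOn_faIntegrand.aestronglyMeasurable measurableSet_Ioi
  have key := hasDerivAt_integral_of_dominated_loc_of_deriv_le
    (F := faIntegrand a) (F' := fun x t => -2 * faIntegrand (a + 1) x t)
    (bound := fun t => 2 * faIntegrand (a + 1) (x₀ - 1) t)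
    (Metric.ball_mem_nhds x₀ one_pos) (Eventually.of_forall (hmeas a))
    (integrableOn_faIntegrand ha x₀) ((hmeas (a + 1) x₀).const_mul _) ?_
    ((integrableOn_faIntegrand (by linarith) _).const_mul 2) ?_
  · have hderiv := key.2
    rw [integral_const_mul] at hderiv
    exact hderiv
  · filter_upwards [ae_restrict_mem measurableSet_Ioi] with t (ht : 0 < t) x hx
    have hx₀ : x₀ - 1 ≤ x := by linarith [(abs_lt.mp (Metric.mem_ball.mp hx)).1, Real.dist_eq x x₀]
    rw [norm_mul, norm_neg, Real.norm_ofNat, norm_of_nonneg (faIntegrand_pos ht).le]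
    gcongr
    exact faIntegrand_antitone_param hx₀ ht.le
  · filter_upwards [ae_restrict_mem measurableSet_Ioi] with t (ht : 0 < t) x _
    exact hasDerivAt_faIntegrand_param ht

/-- Integration by parts of `d/dt (exp(-t² - 2zt) · t^(a+1))` over `(0, ∞)`. -/
lemma Fa_recurrence (ha : -1 < a) (z : ℝ) :
    2 * Fa (a + 2) z + 2 * z * Fa (a + 1) z = (a + 1) * Fa a z := by
  have ha1 : 0 < a + 1 := by linarith
  have hint := fun b (hb : -1 < b) => integrableOn_faIntegrand hb z
  have hderivInt : IntegrableOn (fun t => (a + 1) * faIntegrand a z t - 2 * faIntegrand (a + 2) z t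
      - 2 * z * faIntegrand (a + 1) z t) (Set.Ioi 0) :=
    (((hint a ha).const_mul _).sub ((hint _ (by linarith)).const_mul _)).sub
      ((hint _ (by linarith)).const_mul _)
  have hcont : ContinuousWithinAt (faIntegrand (a + 1) z) (Set.Ici 0) 0 :=
    ((continuous_exp.comp (by fun_prop)).continuousAt.mul
      (continuousAt_rpow_const 0 (a + 1) (Or.inr ha1.le))).continuousWithinAt
  have hFTC := integral_Ioi_of_hasDerivAt_of_tendsto hcont
    (fun t (ht : 0 < t) => hasDerivAt_faIntegrand ht) hderivInt tendsto_faIntegrand_atTop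
  have hzero : faIntegrand (a + 1) z 0 = 0 := by simp [faIntegrand, zero_rpow ha1.ne']
  rw [hzero, sub_zero, integral_sub ?_ ((hint _ (by linarith)).const_mul _),
    integral_sub ((hint a ha).const_mul _) ((hint _ (by linarith)).const_mul _),
    integral_const_mul, integral_const_mul, integral_const_mul] at hFTC
  · change (a + 1) * Fa a z - 2 * Fa (a + 2) z - 2 * z * Fa (a + 1) z = 0 at hFTC
    linarith
  · exact ((hint a ha).const_mul _).sub ((hint _ (by linarith)).const_mul _)

end Fa

/-- `Phi β σh δ c = scaledFa β σh c (δ/β - 1)` definitionally. -/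
noncomputable def scaledFa (β σh c b x : ℝ) : ℝ :=
  Fa b ((c - β * x) / (√β * σh))

section scaledFa

variable {β σh c b : ℝ}

lemma hasDerivAt_scaledFa (hb : -1 < b) (x : ℝ) :
    HasDerivAt (scaledFa β σh c b) (2 * β / (√β * σh) * scaledFa β σh c (b + 1) x) x := by
  have hu : HasDerivAt (fun x => (c - β * x) / (√β * σh)) (-(β * 1) / (√β * σh)) x :=
    (((hasDerivAt_id' x).const_mul β).const_sub c).div_const _
  refine ((hasDerivAt_Fa hb _).comp x hu).congr_deriv ?_
  rw [scaledFa]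
  ring

lemma deriv_scaledFa (hb : -1 < b) :
    deriv (scaledFa β σh c b) = fun x => 2 * β / (√β * σh) * scaledFa β σh c (b + 1) x :=
  funext fun x => (hasDerivAt_scaledFa hb x).deriv

lemma differentiable_scaledFa (hb : -1 < b) : Differentiable ℝ (scaledFa β σh c b) :=
  fun x => (hasDerivAt_scaledFa hb x).differentiableAt

/-- `Fa_recurrence` evaluated at `u(x)`. -/
lemma scaledFa_ode (hβ : 0 < β) (hσ : σh ≠ 0) (hb : -1 < b) (x : ℝ) :
    σh ^ 2 / 2 * deriv (deriv (scaledFa β σh c b)) x + (c - β * x) * deriv (scaledFa β σh c b) x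
      = β * (b + 1) * scaledFa β σh c b x := by
  rw [deriv_scaledFa hb, deriv_const_mul_field', deriv_scaledFa (by linarith)]
  simp only [scaledFa, add_assoc, one_add_one_eq_two]
  set z := (c - β * x) / (√β * σh) with hz
  have hsqrt_pos : 0 < √β := sqrt_pos.mpr hβ
  have hp_sq : σh ^ 2 / 2 * (2 * β / (√β * σh)) ^ 2 = 2 * β := by
    field_simp
    rw [sq_sqrt hβ.le]
  have hp_mul : (c - β * x) * (2 * β / (√β * σh)) = 2 * β * z := by
    rw [hz]
    ring
  linear_combination β * Fa_recurrence hb z + Fa (b + 2) z * hp_sq + Fa (b + 1) z * hp_mul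

end scaledFa

lemma hasDerivAt_deriv_div_self {f : ℝ → ℝ} {y : ℝ} (hf : DifferentiableAt ℝ f y)
    (hf' : DifferentiableAt ℝ (deriv f) y) (hy : f y ≠ 0) :
    HasDerivAt (fun z => deriv f z / f z) (deriv (deriv f) y / f y - (deriv f y / f y) ^ 2) y :=
  (hf'.hasDerivAt.div hf.hasDerivAt hy).congr_deriv (by field_simp)

lemma ode_div_eq_mul_deriv_sub_of_logDeriv_eq {f g : ℝ → ℝ} {y A B D : ℝ}
    (hf : DifferentiableAt ℝ f y) (hf' : DifferentiableAt ℝ (deriv f) y) (hfy : f y ≠ 0)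
    (hg : DifferentiableAt ℝ g y) (hg' : DifferentiableAt ℝ (deriv g) y) (hgy : g y ≠ 0)
    (hode : A * deriv (deriv g) y + B * deriv g y - D * g y = 0)
    (hroot : deriv f y / f y = deriv g y / g y) :
    A * (deriv (deriv f) y / f y) - D + B * (deriv f y / f y) =
      A * (deriv (fun z => deriv f z / f z) y - deriv (fun z => deriv g z / g z) y) := by
  rw [(hasDerivAt_deriv_div_self hf hf' hfy).deriv, (hasDerivAt_deriv_div_self hg hg' hgy).deriv,
    hroot]
  have hq : A * (deriv (deriv g) y / g y) + B * (deriv g y / g y) = D := by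
    field_simp
    linear_combination hode
  linear_combination hq

/-- At a point `y∞` where `f'/f = Φ''/Φ'`, the quantity
`k(y) = (σ̂²/2)·f''/f - (β+δ) + (c-βy)·f'/f` equals
`(σ̂²/2)·[(f'/f)'(y∞) - (Φ''/Φ')'(y∞)]`; in particular `k(y∞) < 0` if
`(f'/f)'(y∞) < (Φ''/Φ')'(y∞)`. -/
theorem k_at_yinf (β σh δ c : ℝ) (hβ : 0 < β) (hσ : 0 < σh) (hδ : 0 < δ)
    (f : ℝ → ℝ) (hf : ContDiff ℝ 2 f) (hfpos : ∀ y : ℝ, 0 < f y)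
    (yinf : ℝ)
    (hroot : deriv f yinf / f yinf =
      deriv (deriv (Phi β σh δ c)) yinf / deriv (Phi β σh δ c) yinf) :
    let k : ℝ → ℝ := fun y =>
      σh ^ 2 / 2 * (deriv (deriv f) y / f y) - (β + δ) + (c - β * y) * (deriv f y / f y);
    k yinf = σh ^ 2 / 2 *
        (deriv (fun z => deriv f z / f z) yinf -
          deriv (fun z => deriv (deriv (Phi β σh δ c)) z / deriv (Phi β σh δ c) z) yinf) ∧
      (deriv (fun z => deriv f z / f z) yinf <
          deriv (fun z => deriv (deriv (Phi β σh δ c)) z / deriv (Phi β σh δ c) z) yinf →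
        k yinf < 0) := by
  intro k
  have hδβ : 0 < δ / β := div_pos hδ hβ
  have hb : -1 < δ / β := by linarith
  set p := 2 * β / (√β * σh)
  have hderiv : deriv (Phi β σh δ c) = fun x => p * scaledFa β σh c (δ / β) x := by
    rw [show Phi β σh δ c = scaledFa β σh c (δ / β - 1) from rfl,
      deriv_scaledFa (by linarith), sub_add_cancel]
  have hode : σh ^ 2 / 2 * deriv (deriv (deriv (Phi β σh δ c))) yinf
      + (c - β * yinf) * deriv (deriv (Phi β σh δ c)) yinf
      - (β + δ) * deriv (Phi β σh δ c) yinf = 0 := by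
    rw [hderiv, deriv_const_mul_field', deriv_const_mul_field']
    have hβδ : β * (δ / β + 1) = β + δ := by field_simp; ring
    linear_combination p * scaledFa_ode hβ hσ.ne' hb yinf + p * scaledFa β σh c (δ / β) yinf * hβδ
  have hkey : k yinf = _ := ode_div_eq_mul_deriv_sub_of_logDeriv_eq
    (hf.differentiable (by norm_num) yinf) (hf.differentiable_deriv_two yinf) (hfpos yinf).ne'
    (by rw [hderiv]; exact ((differentiable_scaledFa hb).const_mul p) yinf)
    (by rw [hderiv, deriv_const_mul_field', deriv_scaledFa hb]
        exact ((differentiable_scaledFa (by linarith)).const_mul p |>.const_mul p) yinf)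
    (by rw [hderiv]; exact (mul_pos (by positivity) (Fa_pos hb _)).ne')
    hode hroot
  exact ⟨hkey, fun hlt => hkey ▸ mul_neg_of_pos_of_neg (by positivity) (sub_neg.mpr hlt)⟩
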